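/- arXiv:1812.03397 — 2 statements merged into one kernel-verified Lean document; each statement's English description precedes it below -/
import Mathlib

section
/- If q : ℝ → ℍ is differentiable and q(t) commutes with q'(t) for all t, then the function t ↦ e^{q(t)} is differentiable and its derivative equals e^{q(t)} · q'(t). -/
open scoped Quaternion
open NormedSpace

section

variable {𝕂 𝔸 : Type*} [RCLike 𝕂] [NormedRing 𝔸] [NormedAlgebra 𝕂 𝔸] [CompleteSpace 𝔸]

/-- Along a direction `h` commuting with `x`, `exp (x + s • h) = exp x * exp (s • h)`, whose
derivative at `s = 0` is `exp x * h`. -/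
theorem fderiv_exp_apply_of_commute {x h : 𝔸} (hxh : Commute x h) :
    fderiv 𝕂 exp x h = exp x * h := by
  have hline : HasDerivAt (fun s : 𝕂 => x + s • h) h 0 := by
    simpa using ((hasDerivAt_id (0 : 𝕂)).smul_const h).const_add x
  have hchain : HasDerivAt (fun s : 𝕂 => exp (x + s • h)) (fderiv 𝕂 exp x h) 0 :=
    (exp_analytic x).differentiableAt.hasFDerivAt.comp_hasDerivAt_of_eq 0 hline (by simp)
  have hsplit : HasDerivAt (fun s : 𝕂 => exp (x + s • h)) (exp x * h) 0 := by
    have := (hasDerivAt_exp_smul_const (𝕂 := 𝕂) h 0).const_mul (exp x)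
    simp only [zero_smul, exp_zero, one_mul] at this
    have hball (y : 𝔸) : y ∈ Metric.eball (0 : 𝔸) (expSeries 𝕂 𝔸).radius :=
      (expSeries_radius_eq_top 𝕂 𝔸).symm ▸ edist_lt_top _ _
    exact this.congr_of_eventuallyEq <| .of_forall fun s =>
      exp_add_of_commute_of_mem_ball (hxh.smul_right s) (hball _) (hball _)
  exact hchain.unique hsplit

theorem hasDerivAt_exp_comp_of_commute {f : 𝕂 → 𝔸} {f' : 𝔸} {t : 𝕂} (hf : HasDerivAt f f' t)
    (hc : Commute (f t) f') : HasDerivAt (fun s => exp (f s)) (exp (f t) * f') t := by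
  have := (exp_analytic (𝕂 := 𝕂) (f t)).differentiableAt.hasFDerivAt.comp_hasDerivAt t hf
  rwa [fderiv_exp_apply_of_commute hc] at this

end

/-- If `q : ℝ → ℍ` is differentiable and `q(t)` commutes with `q'(t)` for all `t`, then
`t ↦ e^{q(t)}` is differentiable with derivative `e^{q(t)} * q'(t)`. -/
theorem quaternion_deriv_exp_of_commute (q : ℝ → ℍ[ℝ]) (hq : Differentiable ℝ q)
    (hc : ∀ t : ℝ, q t * deriv q t = deriv q t * q t) :
    Differentiable ℝ (fun t => NormedSpace.exp (q t)) ∧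
      ∀ t : ℝ, deriv (fun t => NormedSpace.exp (q t)) t = NormedSpace.exp (q t) * deriv q t := by
  have hexp (t : ℝ) : HasDerivAt (fun t => exp (q t)) (exp (q t) * deriv q t) t :=
    hasDerivAt_exp_comp_of_commute (hq t).hasDerivAt (hc t)
  exact ⟨fun t => (hexp t).differentiableAt, fun t => (hexp t).deriv⟩
end

section
/- Let A be a constant n×n quaternion matrix and b : ℝ → ℍⁿ a continuous column-vector valued function. Then x(t) = e^{A(t−t₀)}·x₀ + e^{At}·∫_{t₀}^{t} e^{−Aτ}·b(τ) dτ satisfies x'(t) = A·x(t) + b(t) and x(t₀) = x₀. -/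
set_option maxHeartbeats 1000000


open scoped Quaternion
open NormedSpace

attribute [local instance] Matrix.linftyOpSemiNormedRing Matrix.linftyOpNormedRing
  Matrix.linftyOpNormedAlgebra

/-- `mulVec` as an `ℝ`-linear map into continuous linear maps. -/
noncomputable def quatMulVec (n : ℕ) :
    Matrix (Fin n) (Fin n) ℍ[ℝ] →ₗ[ℝ] ((Fin n → ℍ[ℝ]) →L[ℝ] (Fin n → ℍ[ℝ])) :=
  { toFun := fun M => LinearMap.toContinuousLinearMap
      { toFun := fun v => M.mulVec v
        map_add' := fun v w => Matrix.mulVec_add M v w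
        map_smul' := fun r v => by
          funext i
          simp [Matrix.mulVec, dotProduct, Finset.smul_sum, mul_smul_comm] }
    map_add' := fun M N => ContinuousLinearMap.ext fun v => Matrix.add_mulVec M N v
    map_smul' := fun r M => ContinuousLinearMap.ext fun v => by
      funext i
      simp [Matrix.mulVec, dotProduct, Finset.smul_sum, smul_mul_assoc] }

theorem hasDerivAt_mulVec {n : ℕ} {E : ℝ → Matrix (Fin n) (Fin n) ℍ[ℝ]}
    {v : ℝ → Fin n → ℍ[ℝ]} {E' : Matrix (Fin n) (Fin n) ℍ[ℝ]} {v' : Fin n → ℍ[ℝ]} {t : ℝ}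
    (hE : HasDerivAt E E' t) (hv : HasDerivAt v v' t) :
    HasDerivAt (fun s => (E s).mulVec (v s)) (E'.mulVec (v t) + (E t).mulVec v') t := by
  have hcontL : Continuous (quatMulVec n) := (quatMulVec n).continuous_of_finiteDimensional
  have hL : HasFDerivAt (fun M : Matrix (Fin n) (Fin n) ℍ[ℝ] => quatMulVec n M)
      (ContinuousLinearMap.mk (quatMulVec n) hcontL) (E t) := by
    exact (ContinuousLinearMap.mk (quatMulVec n) hcontL).hasFDerivAt
  have hc : HasDerivAt (fun s => quatMulVec n (E s)) (quatMulVec n E') t := by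
    exact (@HasFDerivAt.comp_hasDerivAt ℝ _ (Matrix (Fin n) (Fin n) ℍ[ℝ]) _ _
      ((Fin n → ℍ[ℝ]) →L[ℝ] (Fin n → ℍ[ℝ])) _ _ E E' t _ _ hL) (by exact hE)
  have := hc.clm_apply hv
  exact this

/-- For constant `A` and continuous `b`, the function
`x(t) = e^{A(t−t₀)} x₀ + e^{At} ∫_{t₀}^{t} e^{−Aτ} b(τ) dτ` solves
`x' = A x + b`, `x(t₀) = x₀`. -/
theorem quaternion_matrix_exp_solves_nonhom_ivp (n : ℕ)
    (A : Matrix (Fin n) (Fin n) ℍ[ℝ]) (t₀ : ℝ) (x₀ : Fin n → ℍ[ℝ])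
    (b : ℝ → Fin n → ℍ[ℝ]) (hb : Continuous b) :
    (∀ t : ℝ, HasDerivAt
        (fun t => (exp ((t - t₀) • A)).mulVec x₀ +
          (exp (t • A)).mulVec (∫ τ in t₀..t, (exp ((-τ) • A)).mulVec (b τ)))
        (A.mulVec ((exp ((t - t₀) • A)).mulVec x₀ +
          (exp (t • A)).mulVec (∫ τ in t₀..t, (exp ((-τ) • A)).mulVec (b τ))) + b t)
        t) ∧
      (exp ((t₀ - t₀) • A)).mulVec x₀ +
        (exp (t₀ • A)).mulVec (∫ τ in t₀..t₀, (exp ((-τ) • A)).mulVec (b τ)) = x₀ := by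
  letI : NormedAlgebra ℚ ℍ[ℝ] := .restrictScalars ℚ ℝ ℍ[ℝ]
  have h1 : Continuous fun τ : ℝ => exp ((-τ) • A) :=
    exp_continuous.comp (continuous_neg.smul continuous_const)
  have hcont : Continuous fun τ : ℝ => (exp ((-τ) • A)).mulVec (b τ) :=
    h1.matrix_mulVec hb
  constructor
  · intro t
    -- derivative of the integral
    have hv : HasDerivAt (fun s => ∫ τ in t₀..s, (exp ((-τ) • A)).mulVec (b τ))
        ((exp ((-t) • A)).mulVec (b t)) t :=
      intervalIntegral.integral_hasDerivAt_right (hcont.intervalIntegrable _ _)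
        hcont.stronglyMeasurable.stronglyMeasurableAtFilter hcont.continuousAt
    -- derivative of the exponentials
    have hE : HasDerivAt (fun s : ℝ => exp (s • A)) (A * exp (t • A)) t :=
      hasDerivAt_exp_smul_const' A t
    have hE1 : HasDerivAt (fun s : ℝ => exp ((s - t₀) • A)) (A * exp ((t - t₀) • A)) t := by
      have := (hasDerivAt_exp_smul_const' A (t - t₀)).scomp t
        ((hasDerivAt_id t).sub_const t₀)
      simp at this
      exact this
    have h1 : HasDerivAt (fun s : ℝ => (exp ((s - t₀) • A)).mulVec x₀)
        ((A * exp ((t - t₀) • A)).mulVec x₀) t := by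
      simpa using hasDerivAt_mulVec hE1 (hasDerivAt_const t x₀)
    have h2 := hasDerivAt_mulVec hE hv
    have key := h1.add h2
    have hcomm : Commute (t • A) ((-t) • A) := by
      unfold Commute SemiconjBy
      rw [smul_mul_smul_comm, smul_mul_smul_comm, mul_comm]
    have hinv : exp (t • A) * exp ((-t) • A) = 1 := by
      refine (exp_add_of_commute hcomm).symm.trans ?_
      simp
    refine key.congr_deriv ?_
    rw [Matrix.mulVec_add]
    simp only [Matrix.mulVec_mulVec]
    rw [hinv, Matrix.one_mulVec]
    abel
  · simp
end
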